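/- arXiv:2603.07522 — 2 statements merged into one kernel-verified Lean document; each statement's English description precedes it below -/
import Mathlib

section
/- Let S_1, ..., S_k be exchangeable real-valued random variables and let q̂ be the ⌈(1-α)k⌉-th order statistic of S_1, ..., S_k. Then for each i, P(S_i ≤ q̂) ≥ 1 - α. -/
/-!
Let `r = ⌈(1 - α) k⌉`, so `1 ≤ r ≤ k`. For every outcome at least `r` of the scores lie at or
below their `r`-th order statistic `q̂`, so the probabilities of the `k` events `{S_j ≤ q̂}` sum
to at least `r`. Since `q̂` is a symmetric function of the scores, exchangeability makes these `k`
probabilities equal, hence each is at least `r / k ≥ 1 - α`.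
-/

open MeasureTheory

/-- The `r`-th order statistic (1-indexed, `r`-th smallest) of a finite family of reals. -/
noncomputable def orderStat (n r : ℕ) (v : Fin n → ℝ) : ℝ :=
  (List.insertionSort (· ≤ ·) (List.ofFn v)).getD (r - 1) 0

open Finset ENNReal

theorem List.SortedLE.getElem_le_iff_lt_countP {α : Type*} [LinearOrder α] {l : List α}
    (hl : l.SortedLE) {m : ℕ} (hm : m < l.length) (x : α) :
    l[m] ≤ x ↔ m < l.countP (· ≤ x) := by
  constructor
  · intro h
    have hle : ∀ a ∈ l.take (m + 1), a ≤ x := by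
      rintro a ha
      obtain ⟨j, hj, rfl⟩ := List.mem_take_iff_getElem.1 ha
      exact (hl.getElem_le_getElem_of_le (by omega)).trans h
    calc m < (l.take (m + 1)).length := by simp; omega
      _ = (l.take (m + 1)).countP (· ≤ x) := (List.countP_eq_length.2 (by simpa using hle)).symm
      _ ≤ l.countP (· ≤ x) := (List.take_sublist _ _).countP_le
  · contrapose!
    intro h
    have hgt : ∀ a ∈ l.drop m, ¬ a ≤ x := by
      rintro a ha
      obtain ⟨j, hj, rfl⟩ := List.mem_drop_iff_getElem.1 ha
      exact not_le.2 (h.trans_le (hl.getElem_le_getElem_of_le (by omega)))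
    calc l.countP (· ≤ x) = (l.take m).countP (· ≤ x) + (l.drop m).countP (· ≤ x) := by
          rw [← List.countP_append, List.take_append_drop]
      _ ≤ m := by
          rw [(List.countP_eq_zero (l := l.drop m)).2 (by simpa using hgt), add_zero]
          exact List.countP_le_length.trans (by simp)

theorem List.countP_ofFn {α : Type*} {n : ℕ} (v : Fin n → α) (p : α → Bool) :
    (List.ofFn v).countP p = #{j | p (v j)} := by
  rw [List.ofFn_eq_map, List.countP_map, Fin.univ_def]
  simp only [Finset.filter, Finset.card, Multiset.filter_coe, Multiset.coe_card,
    List.countP_eq_length_filter, Function.comp_def, Bool.decide_eq_true]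

theorem orderStat_le_iff {n r : ℕ} (hr : 1 ≤ r) (hrn : r ≤ n) (v : Fin n → ℝ) (x : ℝ) :
    orderStat n r v ≤ x ↔ r ≤ #{j | v j ≤ x} := by
  have hperm := List.perm_insertionSort (· ≤ ·) (List.ofFn v)
  have hlen : r - 1 < (List.insertionSort (· ≤ ·) (List.ofFn v)).length := by
    rw [hperm.length_eq, List.length_ofFn]; omega
  rw [orderStat, List.getD_eq_getElem _ _ hlen,
    List.sortedLE_insertionSort.getElem_le_iff_lt_countP, hperm.countP_eq, List.countP_ofFn]
  simp only [decide_eq_true_eq]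
  omega

theorem orderStat_comp_perm (n r : ℕ) (v : Fin n → ℝ) (π : Equiv.Perm (Fin n)) :
    orderStat n r (v ∘ π) = orderStat n r v := by
  have hsort : (List.ofFn (v ∘ π)).insertionSort (· ≤ ·) = (List.ofFn v).insertionSort (· ≤ ·) :=
    List.Perm.eq_of_sortedLE List.sortedLE_insertionSort List.sortedLE_insertionSort <|
      (List.perm_insertionSort _ _).trans <| (π.ofFn_comp_perm v).trans
        (List.perm_insertionSort _ _).symm
  rw [orderStat, orderStat, hsort]

theorem le_card_filter_le_orderStat {n r : ℕ} (hr : 1 ≤ r) (hrn : r ≤ n) (v : Fin n → ℝ) :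
    r ≤ #{j | v j ≤ orderStat n r v} :=
  (orderStat_le_iff hr hrn v _).1 le_rfl

theorem measurable_orderStat {n r : ℕ} (hr : 1 ≤ r) (hrn : r ≤ n) :
    Measurable (orderStat n r) := by
  refine measurable_of_Iic fun x => ?_
  have hcount : Measurable fun v : Fin n → ℝ => #{j | v j ≤ x} := by
    simp_rw [Finset.card_filter]
    exact Finset.measurable_sum _ fun j _ =>
      Measurable.ite (measurableSet_le (measurable_pi_apply j) measurable_const)
        measurable_const measurable_const
  have hpre : orderStat n r ⁻¹' Set.Iic x
      = (fun v : Fin n → ℝ => #{j | v j ≤ x}) ⁻¹' Set.Ici r := by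
    ext v
    simp [orderStat_le_iff hr hrn]
  rw [hpre]
  exact hcount measurableSet_Ici

section Probability

variable {Ω : Type*} [MeasurableSpace Ω] {μ : Measure Ω}

open scoped Classical in
theorem natCast_mul_measure_univ_le_sum_measure {ι : Type*} (s : Finset ι) {A : ι → Set Ω}
    (hA : ∀ j ∈ s, MeasurableSet (A j)) (r : ℕ) (hr : ∀ ω, r ≤ #{j ∈ s | ω ∈ A j}) :
    r * μ Set.univ ≤ ∑ j ∈ s, μ (A j) := by
  calc r * μ Set.univ = ∫⁻ _, (r : ℝ≥0∞) ∂μ := (lintegral_const _).symm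
    _ ≤ ∫⁻ ω, ∑ j ∈ s, (A j).indicator 1 ω ∂μ := lintegral_mono fun ω => by
        simpa [Set.indicator_apply, Finset.sum_boole] using hr ω
    _ = ∑ j ∈ s, μ (A j) := by
        rw [lintegral_finsetSum _ fun j hj => measurable_one.indicator (hA j hj)]
        exact Finset.sum_congr rfl fun j hj => lintegral_indicator_one (hA j hj)

theorem measure_le_perm_invariant_eq_of_exchangeable {ι : Type*} [DecidableEq ι]
    (S : ι → Ω → ℝ) (hS : ∀ i, Measurable (S i))
    (hexch : ∀ π : Equiv.Perm ι,
      Measure.map (fun ω => fun i => S (π i) ω) μ = Measure.map (fun ω => fun i => S i ω) μ)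
    {q : (ι → ℝ) → ℝ} (hq : Measurable q) (hqπ : ∀ v (π : Equiv.Perm ι), q (v ∘ π) = q v)
    (i j : ι) :
    μ {ω | S j ω ≤ q fun l => S l ω} = μ {ω | S i ω ≤ q fun l => S l ω} := by
  have hC : MeasurableSet {v : ι → ℝ | v i ≤ q v} := measurableSet_le (measurable_pi_apply i) hq
  have hswap : {ω | S j ω ≤ q fun l => S l ω}
      = (fun ω l => S (Equiv.swap i j l) ω) ⁻¹' {v | v i ≤ q v} := by
    ext ω
    change S j ω ≤ q (fun l => S l ω)
      ↔ S (Equiv.swap i j i) ω ≤ q ((fun l => S l ω) ∘ Equiv.swap i j)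
    rw [Equiv.swap_apply_left, hqπ]
  rw [hswap, ← Measure.map_apply (measurable_pi_lambda _ fun l => hS _) hC, hexch,
    Measure.map_apply (measurable_pi_lambda _ hS) hC]
  rfl

end Probability

theorem stmt0_general
    {Ω : Type*} [MeasurableSpace Ω] (μ : Measure Ω) [IsProbabilityMeasure μ]
    (k : ℕ) (α : ℝ) (hα : α ∈ Set.Ioo (0 : ℝ) 1)
    (S : Fin k → Ω → ℝ) (hS : ∀ i, Measurable (S i))
    (hexch : ∀ π : Equiv.Perm (Fin k),
      Measure.map (fun ω => fun i => S (π i) ω) μ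
        = Measure.map (fun ω => fun i => S i ω) μ)
    (i : Fin k) :
    ENNReal.ofReal (1 - α)
      ≤ μ {ω | S i ω ≤ orderStat k (Nat.ceil ((1 - α) * k)) (fun j => S j ω)} := by
  obtain ⟨hα0, hα1⟩ := hα
  set r := ⌈(1 - α) * k⌉₊
  have hk : (0 : ℝ) < k := Nat.cast_pos.2 i.pos
  have hr : 1 ≤ r := Nat.one_le_iff_ne_zero.2 <| by
    simpa [r, Nat.ceil_eq_zero] using mul_pos (sub_pos.2 hα1) hk
  have hrk : r ≤ k := Nat.ceil_le.2 (by nlinarith)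
  have hq := measurable_orderStat hr hrk
  have hqS : Measurable fun ω => orderStat k r fun j => S j ω :=
    hq.comp (measurable_pi_lambda _ hS)
  have hequal : ∀ j, μ {ω | S j ω ≤ orderStat k r fun l => S l ω}
      = μ {ω | S i ω ≤ orderStat k r fun l => S l ω} :=
    measure_le_perm_invariant_eq_of_exchangeable S hS hexch hq (orderStat_comp_perm k r) i
  have hsum : (r : ℝ≥0∞) ≤ k * μ {ω | S i ω ≤ orderStat k r fun l => S l ω} := by
    simpa [hequal] using natCast_mul_measure_univ_le_sum_measure (μ := μ) univ
      (fun j _ => measurableSet_le (hS j) hqS) r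
      (fun ω => by simpa using le_card_filter_le_orderStat hr hrk fun j => S j ω)
  calc ENNReal.ofReal (1 - α) ≤ ENNReal.ofReal (r / k) :=
        ENNReal.ofReal_le_ofReal ((le_div_iff₀ hk).2 (Nat.le_ceil _))
    _ = r / k := by rw [ENNReal.ofReal_div_of_pos hk, ofReal_natCast, ofReal_natCast]
    _ ≤ _ := ENNReal.div_le_of_le_mul' hsum

/-- For exchangeable scores `S_1, ..., S_k` and `q̂` the `⌈(1-α)k⌉`-th order
statistic, `P(S_i ≤ q̂) ≥ 1 - α` for each `i`. -/
theorem stmt0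
    {Ω : Type*} [MeasurableSpace Ω] (μ : Measure Ω) [IsProbabilityMeasure μ]
    (k : ℕ) (hk : 0 < k) (α : ℝ) (hα : α ∈ Set.Ioo (0 : ℝ) 1)
    (S : Fin k → Ω → ℝ) (hS : ∀ i, Measurable (S i))
    (hexch : ∀ π : Equiv.Perm (Fin k),
      Measure.map (fun ω => fun i => S (π i) ω) μ
        = Measure.map (fun ω => fun i => S i ω) μ)
    (i : Fin k) :
    ENNReal.ofReal (1 - α)
      ≤ μ {ω | S i ω ≤ orderStat k (Nat.ceil ((1 - α) * k)) (fun j => S j ω)} :=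
  stmt0_general μ k α hα S hS hexch i
end

section
/- Let ℓ(·; z) be convex and G-Lipschitz for each z, let λ > 0, and define F_n(θ) = (1/n)Σ_{i=1}^n ℓ(θ; z_i) + (λ/2)‖θ‖², with minimizer θ̂_n, and similarly F_{n+1} with the additional point z_{n+1} and minimizer θ̂_{n+1}. Then ‖θ̂_{n+1} - θ̂_n‖₂ ≤ 2G/(λn). -/
/-!
Both regularized risks are `λ`-strongly convex, so each grows quadratically away from its
minimizer; adding the two growth inequalities bounds `λ ‖θ̂ₙ₊₁ - θ̂ₙ‖²` by the increment of
`Fₙ₊₁ - Fₙ` between the minimizers. The penalties cancel in `Fₙ₊₁ - Fₙ`, which is a difference of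
two empirical means of `G`-Lipschitz losses and hence `2G/(n+1)`-Lipschitz.
-/

open Filter Set Topology
open scoped NNReal

section StrongConvexity

variable {E : Type*} [NormedAddCommGroup E] [NormedSpace ℝ E] {s : Set E} {m : ℝ}

theorem StrongConvexOn.add_sq_norm_sub_le_of_isMinOn {f : E → ℝ} {a x : E}
    (hf : StrongConvexOn s m f) (ha : a ∈ s) (hx : x ∈ s) (hmin : IsMinOn f s a) :
    f a + m / 2 * ‖x - a‖ ^ 2 ≤ f x := by
  set K := m / 2 * ‖x - a‖ ^ 2
  have hseg : ∀ t ∈ Ioo (0 : ℝ) 1, f a + (1 - t) * K ≤ f x := by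
    rintro t ⟨ht0, ht1⟩
    have hmem := hf.1 ha hx (sub_nonneg.2 ht1.le) ht0.le (sub_add_cancel 1 t)
    have hle := isMinOn_iff.1 hmin _ hmem
    have hmid := hf.2 ha hx (sub_nonneg.2 ht1.le) ht0.le (sub_add_cancel 1 t)
    rw [norm_sub_rev, smul_eq_mul, smul_eq_mul] at hmid
    refine le_of_mul_le_mul_left ?_ ht0
    linear_combination hle + hmid
  have hlim : Tendsto (fun t : ℝ => f a + (1 - t) * K) (𝓝[>] 0) (𝓝 (f a + (1 - 0) * K)) :=
    (Continuous.tendsto (by fun_prop) 0).mono_left nhdsWithin_le_nhds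
  simpa using le_of_tendsto hlim (eventually_of_mem (Ioo_mem_nhdsGT one_pos) hseg)

theorem StrongConvexOn.dist_le_of_isMinOn_of_lipschitzWith {f g : E → ℝ} {K : ℝ≥0} {a b : E}
    (hm : 0 < m) (hf : StrongConvexOn s m f) (hg : StrongConvexOn s m g)
    (ha : a ∈ s) (hb : b ∈ s) (hfa : IsMinOn f s a) (hgb : IsMinOn g s b)
    (hfg : LipschitzWith K (f - g)) :
    dist a b ≤ K / m := by
  have hgrowth_f := hf.add_sq_norm_sub_le_of_isMinOn ha hb hfa
  have hgrowth_g := hg.add_sq_norm_sub_le_of_isMinOn hb ha hgb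
  have hlip : (f b - g b) - (f a - g a) ≤ K * ‖a - b‖ := by
    rw [← dist_eq_norm, dist_comm]
    exact (le_abs_self _).trans ((Real.dist_eq _ _).symm.trans_le (hfg.dist_le_mul b a))
  rw [norm_sub_rev] at hgrowth_f
  rw [dist_eq_norm, le_div_iff₀ hm]
  rcases (norm_nonneg (a - b)).eq_or_lt with h0 | hpos
  · rw [← h0, zero_mul]
    exact K.2
  · refine le_of_mul_le_mul_right ?_ hpos
    nlinarith

end StrongConvexity

theorem ConvexOn.sum {𝕜 E β ι : Type*} [Semiring 𝕜] [PartialOrder 𝕜] [AddCommMonoid E]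
    [AddCommMonoid β] [PartialOrder β] [IsOrderedAddMonoid β] [SMul 𝕜 E] [Module 𝕜 β]
    {s : Set E} {t : Finset ι} {f : ι → E → β} (hs : Convex 𝕜 s)
    (hf : ∀ i ∈ t, ConvexOn 𝕜 s (f i)) :
    ConvexOn 𝕜 s fun x => ∑ i ∈ t, f i x := by
  induction t using Finset.cons_induction with
  | empty => simpa using convexOn_const 0 hs
  | cons i t hi ih =>
    simp only [Finset.sum_cons]
    exact (hf i (t.mem_cons_self i)).add (ih fun j hj => hf j (Finset.mem_cons_of_mem hj))

theorem ConvexOn.strongConvexOn_add_sq_norm {E : Type*} [NormedAddCommGroup E]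
    [InnerProductSpace ℝ E] {s : Set E} {g : E → ℝ} (m : ℝ) (hg : ConvexOn ℝ s g) :
    StrongConvexOn s m fun x => g x + m / 2 * ‖x‖ ^ 2 :=
  strongConvexOn_iff_convex.2 (by simpa using hg)

theorem abs_mean_sub_mean_castSucc_le {n : ℕ} (hn : 0 < n) (a : Fin (n + 1) → ℝ) {B : ℝ}
    (ha : ∀ i, |a i| ≤ B) :
    |1 / ((n : ℝ) + 1) * ∑ i, a i - 1 / (n : ℝ) * ∑ i : Fin n, a i.castSucc|
      ≤ 2 * B / ((n : ℝ) + 1) := by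
  have hn' : (0 : ℝ) < n := Nat.cast_pos.2 hn
  set S := ∑ i : Fin n, a i.castSucc
  have hS : |S| ≤ n * B := by
    refine (Finset.abs_sum_le_sum_abs _ _).trans ?_
    simpa using Finset.sum_le_sum fun (i : Fin n) (_ : i ∈ Finset.univ) => ha i.castSucc
  have hmean : |S / n| ≤ B := by
    rw [abs_div, abs_of_pos hn', div_le_iff₀ hn']
    linarith
  have hsplit : 1 / ((n : ℝ) + 1) * ∑ i, a i - 1 / (n : ℝ) * S
      = (a (Fin.last n) - S / n) / (n + 1) := by
    rw [Fin.sum_univ_castSucc]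
    field_simp
    ring
  rw [hsplit, abs_div, abs_of_pos (by positivity : (0 : ℝ) < n + 1)]
  refine div_le_div_of_nonneg_right ?_ (by positivity)
  linarith [abs_sub (a (Fin.last n)) (S / n), ha (Fin.last n)]

/-- Add-one stability of ridge-regularized ERM with convex `G`-Lipschitz losses:
`‖θ̂_{n+1} - θ̂_n‖ ≤ 2G/(λn)`. -/
theorem stmt7 {d : ℕ} {Z : Type*} (n : ℕ) (hn : 0 < n)
    (G lam : ℝ) (hG : 0 ≤ G) (hlam : 0 < lam)
    (z : Fin (n + 1) → Z)
    (ℓ : EuclideanSpace ℝ (Fin d) → Z → ℝ)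
    (hconv : ∀ w, ConvexOn ℝ Set.univ (fun θ => ℓ θ w))
    (hlip : ∀ w, LipschitzWith (Real.toNNReal G) (fun θ => ℓ θ w))
    (Fn Fn1 : EuclideanSpace ℝ (Fin d) → ℝ)
    (hFn : Fn = fun θ =>
      (1 / (n : ℝ)) * ∑ i : Fin n, ℓ θ (z i.castSucc) + lam / 2 * ‖θ‖ ^ 2)
    (hFn1 : Fn1 = fun θ =>
      (1 / ((n : ℝ) + 1)) * ∑ i : Fin (n + 1), ℓ θ (z i) + lam / 2 * ‖θ‖ ^ 2)
    (θn θn1 : EuclideanSpace ℝ (Fin d))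
    (hθn : ∀ θ, Fn θn ≤ Fn θ) (hθn1 : ∀ θ, Fn1 θn1 ≤ Fn1 θ) :
    ‖θn1 - θn‖ ≤ 2 * G / (lam * n) := by
  have hstrong : StrongConvexOn univ lam Fn := hFn ▸
    ((ConvexOn.sum convex_univ fun i _ => hconv _).smul
      (by positivity)).strongConvexOn_add_sq_norm lam
  have hstrong1 : StrongConvexOn univ lam Fn1 := hFn1 ▸
    ((ConvexOn.sum convex_univ fun i _ => hconv _).smul
      (by positivity)).strongConvexOn_add_sq_norm lam
  have hloss : ∀ w x y, |ℓ x w - ℓ y w| ≤ G * ‖x - y‖ := fun w x y => by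
    simpa [Real.dist_eq, dist_eq_norm, hG] using (hlip w).dist_le_mul x y
  have hdiff : LipschitzWith (2 * G / (n + 1)).toNNReal (Fn1 - Fn) := by
    refine LipschitzWith.of_dist_le_mul fun x y => ?_
    rw [Real.dist_eq, dist_eq_norm, Real.coe_toNNReal _ (by positivity), div_mul_eq_mul_div,
      mul_assoc]
    convert abs_mean_sub_mean_castSucc_le hn (fun i => ℓ x (z i) - ℓ y (z i))
      fun i => hloss (z i) x y using 2
    simp only [hFn, hFn1, Pi.sub_apply, Finset.sum_sub_distrib]
    ring
  calc ‖θn1 - θn‖ = dist θn1 θn := (dist_eq_norm _ _).symm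
    _ ≤ (2 * G / (n + 1)).toNNReal / lam :=
      hstrong1.dist_le_of_isMinOn_of_lipschitzWith hlam hstrong (mem_univ _) (mem_univ _)
        (isMinOn_univ_iff.2 hθn1) (isMinOn_univ_iff.2 hθn) hdiff
    _ = 2 * G / ((n + 1) * lam) := by
      rw [Real.coe_toNNReal _ (by positivity), div_div]
    _ ≤ 2 * G / (lam * n) := by
      rw [mul_comm lam]
      gcongr
      linarith
end
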